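/- arXiv:0804.0570 — 7 statements merged into one kernel-verified Lean document; each statement's English description precedes it below -/
import Mathlib

section
/- Let G be a graph on n vertices that admits a total edge cover (an edge cover in which every connected component of the subgraph induced by the cover contains at least two edges). Then the maximum number of vertex-disjoint paths with two edges (P2's) in G plus the minimum size of a total edge cover of G equals n. -/
open Finset

def P2Verts {V : Type*} [DecidableEq V] (p : V × V × V) : Finset V := {p.1, p.2.1, p.2.2}

def IsP2 {V : Type*} (G : SimpleGraph V) (p : V × V × V) : Prop :=
  G.Adj p.1 p.2.1 ∧ G.Adj p.2.1 p.2.2 ∧ p.1 ≠ p.2.2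

def IsP2Packing {V : Type*} [DecidableEq V] (G : SimpleGraph V) (P : Finset (V × V × V)) : Prop :=
  (∀ p ∈ P, IsP2 G p) ∧
  ∀ p ∈ P, ∀ q ∈ P, p ≠ q → Disjoint (P2Verts p) (P2Verts q)

def PackVerts {V : Type*} [DecidableEq V] (P : Finset (V × V × V)) : Finset V :=
  P.biUnion P2Verts

def IsMaximalP2Packing {V : Type*} [DecidableEq V] (G : SimpleGraph V)
    (P : Finset (V × V × V)) : Prop :=
  IsP2Packing G P ∧ ∀ q, IsP2 G q → ¬ Disjoint (P2Verts q) (PackVerts P)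

def P2Edges {V : Type*} [DecidableEq V] (p : V × V × V) : Finset (Sym2 V) :=
  {s(p.1, p.2.1), s(p.2.1, p.2.2)}

/-- EC is a total edge cover: edges of G covering every vertex, such that every
connected component of the spanning subgraph formed by EC has at least two edges. -/
def IsTotalEdgeCover {V : Type*} (G : SimpleGraph V) (EC : Finset (Sym2 V)) : Prop :=
  (EC : Set (Sym2 V)) ⊆ G.edgeSet ∧
  (∀ v : V, ∃ e ∈ EC, v ∈ e) ∧
  ∀ e ∈ EC, ∃ e' ∈ EC, e' ≠ e ∧ ∃ a ∈ e, ∃ b ∈ e',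
    (SimpleGraph.fromEdgeSet (EC : Set (Sym2 V))).Reachable a b

/-!
A total edge cover `EC` splits `G` into components of `(V, EC)` with at least two edges each, so
every component contains a `P2`; one `P2` per component is a packing with at least `n - |EC|`
paths, since a graph with `c` components on `n` vertices has at least `n - c` edges.

Conversely, a maximum packing `P` yields a total edge cover with at most `n - |P|` edges: the
`2|P|` edges of its paths, and one edge from each of the `n - 3|P|` uncovered vertices to a
neighbour, chosen among the covered vertices whenever possible. If an uncovered vertex `v` and its
chosen neighbour `u` both have only uncovered neighbours, maximality of `P` forces `uv` to be an
isolated edge of `G`, which a graph with a total edge cover does not have; hence every edge of the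
cover meets another one.
-/

open SimpleGraph

section

variable {V : Type*}

namespace SimpleGraph

variable {H : SimpleGraph V}

lemma exists_isP2_of_walk {p q x y : V} (hpq : H.Adj p q) (w : H.Walk q x) (hxy : H.Adj x y)
    (hne : s(p, q) ≠ s(x, y)) : ∃ t, IsP2 H t ∧ H.Reachable q t.2.1 := by
  induction w generalizing p with
  | nil => exact ⟨(p, _, y), ⟨hpq, hxy, fun (hpy : p = y) => hne (hpy ▸ Sym2.eq_swap)⟩, .rfl⟩
  | @cons q z x hqz w ih =>
    by_cases hzp : z = p
    · subst hzp
      obtain ⟨t, ht, hreach⟩ := ih hqz hxy (by rwa [Sym2.eq_swap])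
      exact ⟨t, ht, hqz.reachable.trans hreach⟩
    · exact ⟨(p, q, z), ⟨hpq, hqz, Ne.symm hzp⟩, .rfl⟩

lemma Reachable.mem_of_forall_adj_mem {s : Set V} (hs : ∀ ⦃x y⦄, H.Adj x y → x ∈ s → y ∈ s)
    {a b : V} (hab : H.Reachable a b) (ha : a ∈ s) : b ∈ s := by
  obtain ⟨w⟩ := hab
  induction w with
  | nil => exact ha
  | cons hadj _ ih => exact ih (hs hadj ha)

lemma Reachable.exists_adj_dist_lt {v r : V} (hvr : H.Reachable v r) (hne : v ≠ r) :
    ∃ u, H.Adj v u ∧ H.dist u r < H.dist v r := by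
  obtain ⟨w, hw⟩ := hvr.exists_walk_length_eq_dist
  obtain ⟨u, hvu, rest, rfl⟩ := Walk.exists_eq_cons_of_ne hne w
  have := dist_le rest
  rw [Walk.length_cons] at hw
  exact ⟨u, hvu, by omega⟩

/-- Every vertex other than the chosen representative of its component is sent injectively to
the first edge of a shortest path towards that representative. -/
lemma card_le_card_edgeFinset_add_card_connectedComponent [Fintype V] [Fintype H.edgeSet]
    [Fintype H.ConnectedComponent] :
    Fintype.card V ≤ #H.edgeFinset + Fintype.card H.ConnectedComponent := by
  classical
  set rep : V → V := fun v => (H.connectedComponentMk v).out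
  have hrep (v : V) : H.Reachable v (rep v) :=
    ConnectedComponent.exact (H.connectedComponentMk v).out_eq.symm
  have hrep_eq {v w : V} (h : H.Reachable v w) : rep v = rep w := by
    simp only [rep, ConnectedComponent.sound h]
  choose! nbr hnbr using fun v (hv : v ≠ rep v) => (hrep v).exists_adj_dist_lt hv
  have hroots : #{v | v = rep v} ≤ Fintype.card H.ConnectedComponent := by
    refine card_le_card_of_injOn H.connectedComponentMk (fun _ _ => mem_univ _) ?_
    intro v hv w hw hvw
    simp only [mem_coe, mem_filter, mem_univ, true_and] at hv hw
    rw [hv, hw]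
    exact hrep_eq (ConnectedComponent.exact hvw)
  have hrest : #{v | ¬v = rep v} ≤ #H.edgeFinset := by
    refine card_le_card_of_injOn (fun v => s(v, nbr v)) (fun v hv => ?_) ?_
    · simpa using (hnbr v (by simpa using hv)).1
    intro v hv w hw hvw
    simp only [mem_coe, mem_filter, mem_univ, true_and] at hv hw
    rcases Sym2.eq_iff.mp hvw with ⟨hvw, -⟩ | ⟨rfl, hw'⟩
    · exact hvw
    · obtain ⟨hadj, hw_lt⟩ := hnbr w hw
      have hv_lt := (hnbr _ hv).2
      rw [hw', ← hrep_eq hadj.reachable] at hv_lt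
      omega
  have := card_filter_add_card_filter_not (s := univ) (fun v => v = rep v)
  rw [card_univ] at this
  omega

end SimpleGraph

section P2

variable {G H : SimpleGraph V} {p : V × V × V}

lemma IsP2.mono (hHG : H ≤ G) (hp : IsP2 H p) : IsP2 G p :=
  ⟨hHG hp.1, hHG hp.2.1, hp.2.2⟩

variable [DecidableEq V]

lemma IsP2.card_p2Verts (hp : IsP2 G p) : #(P2Verts p) = 3 := by
  obtain ⟨h1, h2, h3⟩ := hp
  simp [P2Verts, card_insert_of_notMem, h1.ne, h2.ne, h3]

lemma IsP2.p2Edges_subset_edgeSet (hp : IsP2 G p) : (P2Edges p : Set (Sym2 V)) ⊆ G.edgeSet := by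
  simp [P2Edges, Set.insert_subset_iff, hp.1, hp.2.1]

lemma IsP2.exists_ne_mem_p2Edges (hp : IsP2 G p) {e : Sym2 V} (he : e ∈ P2Edges p) :
    ∃ e' ∈ P2Edges p, e' ≠ e ∧ ∃ x ∈ e, x ∈ e' := by
  have hne : s(p.1, p.2.1) ≠ s(p.2.1, p.2.2) := fun h => by
    rcases Sym2.eq_iff.mp h with ⟨h1, -⟩ | ⟨h1, -⟩
    exacts [hp.1.ne h1, hp.2.2 h1]
  simp only [P2Edges, mem_insert, mem_singleton] at he
  rcases he with rfl | rfl
  · exact ⟨_, by simp [P2Edges], hne.symm, p.2.1, Sym2.mem_mk_right _ _, Sym2.mem_mk_left _ _⟩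
  · exact ⟨_, by simp [P2Edges], hne, p.2.1, Sym2.mem_mk_left _ _, Sym2.mem_mk_right _ _⟩

lemma exists_mem_p2Edges_of_mem_p2Verts {x : V} (hx : x ∈ P2Verts p) :
    ∃ e ∈ P2Edges p, x ∈ e := by
  simp only [P2Verts, mem_insert, mem_singleton] at hx
  rcases hx with rfl | rfl | rfl <;> simp [P2Edges]

lemma mem_p2Verts_of_mem_p2Edges {e : Sym2 V} {x : V} (he : e ∈ P2Edges p) (hx : x ∈ e) :
    x ∈ P2Verts p := by
  simp only [P2Edges, mem_insert, mem_singleton] at he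
  rcases he with rfl | rfl <;> rcases Sym2.mem_iff.mp hx with rfl | rfl <;> simp [P2Verts]

lemma IsP2.connectedComponentMk_eq (hp : IsP2 H p) {x : V} (hx : x ∈ P2Verts p) :
    H.connectedComponentMk x = H.connectedComponentMk p.2.1 := by
  simp only [P2Verts, mem_insert, mem_singleton] at hx
  rcases hx with rfl | rfl | rfl
  · exact ConnectedComponent.sound hp.1.reachable
  · rfl
  · exact ConnectedComponent.sound hp.2.1.symm.reachable

end P2

section Packing

variable [DecidableEq V] {G : SimpleGraph V} {P : Finset (V × V × V)}

lemma IsP2Packing.card_packVerts (hP : IsP2Packing G P) : #(PackVerts P) = 3 * #P := by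
  rw [PackVerts, card_biUnion hP.2, sum_congr rfl fun p hp => (hP.1 p hp).card_p2Verts,
    sum_const, smul_eq_mul, mul_comm]

lemma IsP2Packing.insert (hP : IsP2Packing G P) {q : V × V × V} (hq : IsP2 G q)
    (hdisj : Disjoint (P2Verts q) (PackVerts P)) : IsP2Packing G (insert q P) := by
  have hsub {p : V × V × V} (hp : p ∈ P) : P2Verts p ⊆ PackVerts P := subset_biUnion_of_mem _ hp
  refine ⟨fun p hp => ?_, fun p hp r hr hpr => ?_⟩
  · rcases mem_insert.mp hp with rfl | hp
    exacts [hq, hP.1 p hp]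
  rcases mem_insert.mp hp with rfl | hpP <;> rcases mem_insert.mp hr with rfl | hrP
  · exact absurd rfl hpr
  · exact hdisj.mono_right (hsub hrP)
  · exact (hdisj.mono_right (hsub hpP)).symm
  · exact hP.2 p hpP r hrP hpr

lemma IsP2Packing.isMaximalP2Packing_of_forall_card_le (hP : IsP2Packing G P)
    (hmax : ∀ P', IsP2Packing G P' → #P' ≤ #P) : IsMaximalP2Packing G P := by
  refine ⟨hP, fun q hq hdisj => ?_⟩
  have hqP : q ∉ P := fun hqP => by
    have := disjoint_self.mp (hdisj.mono_right (subset_biUnion_of_mem P2Verts hqP))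
    simpa [this] using hq.card_p2Verts
  have := hmax _ (hP.insert hq hdisj)
  rw [card_insert_of_notMem hqP] at this
  omega

lemma exists_isP2Packing_forall_card_le [Fintype V] (G : SimpleGraph V) :
    ∃ P, IsP2Packing G P ∧ ∀ P', IsP2Packing G P' → #P' ≤ #P := by
  classical
  obtain ⟨P, hP, hmax⟩ :=
    (univ.filter (IsP2Packing G)).exists_max_image card ⟨∅, by simp [IsP2Packing]⟩
  exact ⟨P, (mem_filter.mp hP).2, fun P' hP' => hmax P' (by simpa using hP')⟩

lemma isP2Packing_image_of_connectedComponentMk_eq {H : SimpleGraph V}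
    [Fintype H.ConnectedComponent] (hHG : H ≤ G) {f : H.ConnectedComponent → V × V × V}
    (hf : ∀ C, IsP2 H (f C)) (hfC : ∀ C, H.connectedComponentMk (f C).2.1 = C) :
    IsP2Packing G (univ.image f) := by
  refine ⟨?_, ?_⟩
  · simp only [mem_image, mem_univ, true_and, forall_exists_index, forall_apply_eq_imp_iff]
    exact fun C => (hf C).mono hHG
  simp only [mem_image, mem_univ, true_and, forall_exists_index, forall_apply_eq_imp_iff]
  intro C C' hne
  refine disjoint_left.mpr fun x hx hx' => hne ?_
  rw [← hfC C, ← hfC C', ← (hf C).connectedComponentMk_eq hx, (hf C').connectedComponentMk_eq hx']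

end Packing

namespace IsTotalEdgeCover

variable {G : SimpleGraph V} {EC : Finset (Sym2 V)}

lemma of_forall_exists_ne_mem (hsub : (EC : Set (Sym2 V)) ⊆ G.edgeSet)
    (hcov : ∀ v : V, ∃ e ∈ EC, v ∈ e)
    (hmeet : ∀ e ∈ EC, ∃ e' ∈ EC, e' ≠ e ∧ ∃ x ∈ e, x ∈ e') : IsTotalEdgeCover G EC :=
  ⟨hsub, hcov, fun e he =>
    let ⟨e', he', hne, x, hx, hx'⟩ := hmeet e he
    ⟨e', he', hne, x, hx, x, hx', .rfl⟩⟩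

variable (hEC : IsTotalEdgeCover G EC)
include hEC

lemma exists_adj (v : V) : ∃ u, s(v, u) ∈ EC ∧ G.Adj v u := by
  obtain ⟨e, he, hve⟩ := hEC.2.1 v
  obtain ⟨u, rfl⟩ := Sym2.mem_iff_exists.mp hve
  exact ⟨u, he, hEC.1 he⟩

lemma fromEdgeSet_adj_of_mem {a b : V} (h : s(a, b) ∈ EC) :
    (fromEdgeSet (EC : Set (Sym2 V))).Adj a b :=
  (fromEdgeSet_adj _).mpr ⟨h, (hEC.1 h).ne⟩

lemma fromEdgeSet_le : fromEdgeSet (EC : Set (Sym2 V)) ≤ G := fun _ _ h =>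
  hEC.1 ((fromEdgeSet_adj _).mp h).1

lemma exists_isP2_reachable (v : V) : ∃ t, IsP2 (fromEdgeSet (EC : Set (Sym2 V))) t ∧
    (fromEdgeSet (EC : Set (Sym2 V))).Reachable v t.2.1 := by
  obtain ⟨u, hvu, -⟩ := hEC.exists_adj v
  obtain ⟨e', he', hne, a, ha, b, hb, hab⟩ := hEC.2.2 _ hvu
  obtain ⟨p, hp⟩ := Sym2.mem_iff_exists.mp ha
  obtain ⟨y, rfl⟩ := Sym2.mem_iff_exists.mp hb
  rw [hp] at hvu hne
  have hap := hEC.fromEdgeSet_adj_of_mem hvu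
  obtain ⟨t, ht, hat⟩ := exists_isP2_of_walk hap.symm hab.some (hEC.fromEdgeSet_adj_of_mem he')
    fun h => hne (h.symm.trans Sym2.eq_swap)
  have hva : (fromEdgeSet (EC : Set (Sym2 V))).Reachable v a := by
    rcases Sym2.mem_iff.mp (hp ▸ Sym2.mem_mk_left v u : v ∈ s(a, p)) with rfl | rfl
    exacts [.rfl, hap.symm.reachable]
  exact ⟨t, ht, hva.trans hat⟩

lemma exists_adj_ne_of_adj {v u : V} (hvu : G.Adj v u) :
    (∃ w, G.Adj v w ∧ w ≠ u) ∨ ∃ w, G.Adj u w ∧ w ≠ v := by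
  by_contra! h
  obtain ⟨⟨a, b, c⟩, ⟨hab, hbc, hac⟩, hreach⟩ := hEC.exists_isP2_reachable v
  have hclosed : ∀ ⦃x y⦄, G.Adj x y → x ∈ ({v, u} : Set V) → y ∈ ({v, u} : Set V) := by
    rintro x y hxy (rfl | rfl)
    exacts [Or.inr (h.1 y hxy), Or.inl (h.2 y hxy)]
  have hb := (hreach.mono hEC.fromEdgeSet_le).mem_of_forall_adj_mem hclosed (Or.inl rfl)
  replace hab := hEC.fromEdgeSet_le hab.symm
  replace hbc := hEC.fromEdgeSet_le hbc
  rcases hb with rfl | rfl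
  · exact hac ((h.1 a hab).trans (h.1 c hbc).symm)
  · exact hac ((h.2 a hab).trans (h.2 c hbc).symm)

lemma exists_isP2Packing_card_le_card_add_card [Fintype V] [DecidableEq V] :
    ∃ P, IsP2Packing G P ∧ Fintype.card V ≤ #P + #EC := by
  classical
  set H := fromEdgeSet (EC : Set (Sym2 V))
  have hex (C : H.ConnectedComponent) : ∃ t, IsP2 H t ∧ H.connectedComponentMk t.2.1 = C := by
    obtain ⟨t, ht, hreach⟩ := hEC.exists_isP2_reachable C.out
    exact ⟨t, ht, (ConnectedComponent.sound hreach).symm.trans C.out_eq⟩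
  choose f hf hfC using hex
  refine ⟨univ.image f, isP2Packing_image_of_connectedComponentMk_eq hEC.fromEdgeSet_le hf hfC, ?_⟩
  have hinj : Function.Injective f := fun C C' h => by rw [← hfC C, ← hfC C', h]
  have hedges : #H.edgeFinset ≤ #EC := card_le_card fun e he =>
    (by simpa [H, edgeSet_fromEdgeSet] using he : e ∈ EC ∧ ¬e.IsDiag).1
  rw [card_image_of_injective _ hinj, card_univ]
  have := H.card_le_card_edgeFinset_add_card_connectedComponent
  omega

end IsTotalEdgeCover

section Cover

variable [DecidableEq V] {G : SimpleGraph V} {P : Finset (V × V × V)}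

lemma IsMaximalP2Packing.mem_packVerts_of_adj {v u w : V} (hP : IsMaximalP2Packing G P)
    (hvu : G.Adj v u) (hvw : G.Adj v w) (hwu : w ≠ u) (hv : v ∉ PackVerts P)
    (hu : u ∉ PackVerts P) : w ∈ PackVerts P := by
  by_contra hw
  exact hP.2 (w, v, u) ⟨hvw.symm, hvu, hwu⟩ (by simp [P2Verts, hw, hv, hu])

lemma IsMaximalP2Packing.exists_adj_fun {EC : Finset (Sym2 V)} (hP : IsMaximalP2Packing G P)
    (hEC : IsTotalEdgeCover G EC) : ∃ nb : V → V, (∀ v, G.Adj v (nb v)) ∧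
      ∀ v, v ∉ PackVerts P → nb v ∉ PackVerts P → nb (nb v) ∈ PackVerts P := by
  -- `nb v` is a covered neighbour of `v` whenever `v` has one.
  have hex (v : V) : ∃ u, G.Adj v u ∧ ((∃ x, G.Adj v x ∧ x ∈ PackVerts P) → u ∈ PackVerts P) := by
    by_cases hv : ∃ x, G.Adj v x ∧ x ∈ PackVerts P
    · obtain ⟨x, hvx, hx⟩ := hv
      exact ⟨x, hvx, fun _ => hx⟩
    · obtain ⟨u, -, hvu⟩ := hEC.exists_adj v
      exact ⟨u, hvu, fun h => absurd h hv⟩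
  choose nb hadj hpref using hex
  refine ⟨nb, hadj, fun v hv hnbv => hpref _ ?_⟩
  rcases hEC.exists_adj_ne_of_adj (hadj v) with ⟨w, hvw, hwu⟩ | ⟨w, huw, hwv⟩
  · exact absurd (hpref v ⟨w, hvw, hP.mem_packVerts_of_adj (hadj v) hvw hwu hv hnbv⟩) hnbv
  · exact ⟨w, huw, hP.mem_packVerts_of_adj (hadj v).symm huw hwv hnbv hv⟩

variable [Fintype V]

def packingCover (P : Finset (V × V × V)) (nb : V → V) : Finset (Sym2 V) :=
  P.biUnion P2Edges ∪ (PackVerts P)ᶜ.image fun v => s(v, nb v)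

lemma IsP2Packing.card_packingCover_add_card_le (hP : IsP2Packing G P) (nb : V → V) :
    #(packingCover P nb) + #P ≤ Fintype.card V := by
  have hpaths : #(P.biUnion P2Edges) ≤ 2 * #P :=
    calc #(P.biUnion P2Edges) ≤ ∑ p ∈ P, #(P2Edges p) := card_biUnion_le
      _ ≤ ∑ _p ∈ P, 2 := sum_le_sum fun _ _ => card_le_two
      _ = 2 * #P := by rw [sum_const, smul_eq_mul, mul_comm]
  have hunion := card_union_le (P.biUnion P2Edges) ((PackVerts P)ᶜ.image fun v => s(v, nb v))
  have himage := card_image_le (s := (PackVerts P)ᶜ) (f := fun v => s(v, nb v))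
  have hcompl := card_compl (PackVerts P)
  have hverts := hP.card_packVerts
  have hle := card_le_univ (PackVerts P)
  rw [packingCover]
  omega

lemma IsP2Packing.isTotalEdgeCover_packingCover (hP : IsP2Packing G P) {nb : V → V}
    (hadj : ∀ v, G.Adj v (nb v))
    (hnb : ∀ v, v ∉ PackVerts P → nb v ∉ PackVerts P → nb (nb v) ∈ PackVerts P) :
    IsTotalEdgeCover G (packingCover P nb) := by
  have hcovered {x : V} (hx : x ∈ PackVerts P) :
      ∃ e ∈ P.biUnion P2Edges, x ∈ e ∧ ∀ y ∈ e, y ∈ PackVerts P := by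
    obtain ⟨p, hp, hxp⟩ := mem_biUnion.mp hx
    obtain ⟨e, he, hxe⟩ := exists_mem_p2Edges_of_mem_p2Verts hxp
    exact ⟨e, mem_biUnion.mpr ⟨p, hp, he⟩, hxe,
      fun y hy => mem_biUnion.mpr ⟨p, hp, mem_p2Verts_of_mem_p2Edges he hy⟩⟩
  have hpendant {v : V} (hv : v ∉ PackVerts P) : s(v, nb v) ∈ packingCover P nb :=
    mem_union_right _ (mem_image_of_mem _ (mem_compl.mpr hv))
  refine .of_forall_exists_ne_mem (fun e he => ?_) (fun v => ?_) (fun e he => ?_)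
  · rcases mem_union.mp he with he | he
    · obtain ⟨p, hp, he⟩ := mem_biUnion.mp he
      exact (hP.1 p hp).p2Edges_subset_edgeSet he
    · obtain ⟨v, -, rfl⟩ := mem_image.mp he
      exact hadj v
  · by_cases hv : v ∈ PackVerts P
    · obtain ⟨e, he, hve, -⟩ := hcovered hv
      exact ⟨e, mem_union_left _ he, hve⟩
    · exact ⟨_, hpendant hv, Sym2.mem_mk_left _ _⟩
  rcases mem_union.mp he with he | he
  · obtain ⟨p, hp, he⟩ := mem_biUnion.mp he
    obtain ⟨e', he', hne, hmeet⟩ := (hP.1 p hp).exists_ne_mem_p2Edges he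
    exact ⟨e', mem_union_left _ (mem_biUnion.mpr ⟨p, hp, he'⟩), hne, hmeet⟩
  obtain ⟨v, hv, rfl⟩ := mem_image.mp he
  replace hv := mem_compl.mp hv
  suffices ∃ e' ∈ packingCover P nb, nb v ∈ e' ∧ v ∉ e' by
    obtain ⟨e', he', hnbv, hv'⟩ := this
    exact ⟨e', he', fun h => hv' (h ▸ Sym2.mem_mk_left _ _), nb v, Sym2.mem_mk_right _ _, hnbv⟩
  by_cases hnbv : nb v ∈ PackVerts P
  · obtain ⟨e', he', hnbe', hS⟩ := hcovered hnbv
    exact ⟨e', mem_union_left _ he', hnbe', fun h => hv (hS v h)⟩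
  · refine ⟨_, hpendant hnbv, Sym2.mem_mk_left _ _, fun h => ?_⟩
    rcases Sym2.mem_iff.mp h with h | h
    · exact (hadj v).ne h
    · exact hv (h ▸ hnb v hv hnbv)

lemma IsMaximalP2Packing.exists_isTotalEdgeCover_card_add_card_le {EC : Finset (Sym2 V)}
    (hP : IsMaximalP2Packing G P) (hEC : IsTotalEdgeCover G EC) :
    ∃ EC', IsTotalEdgeCover G EC' ∧ #EC' + #P ≤ Fintype.card V := by
  obtain ⟨nb, hadj, hnb⟩ := hP.exists_adj_fun hEC
  exact ⟨_, hP.1.isTotalEdgeCover_packingCover hadj hnb, hP.1.card_packingCover_add_card_le nb⟩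

end Cover

end

/-- Gallai-type identity: maximum P2-packing size plus minimum total edge cover size = n. -/
theorem stmt0 {V : Type*} [Fintype V] [DecidableEq V] (G : SimpleGraph V)
    (h : ∃ EC : Finset (Sym2 V), IsTotalEdgeCover G EC) :
    ∃ (P : Finset (V × V × V)) (EC : Finset (Sym2 V)),
      IsP2Packing G P ∧ IsTotalEdgeCover G EC ∧
      (∀ P' : Finset (V × V × V), IsP2Packing G P' → P'.card ≤ P.card) ∧
      (∀ EC' : Finset (Sym2 V), IsTotalEdgeCover G EC' → EC.card ≤ EC'.card) ∧
      P.card + EC.card = Fintype.card V := by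
  obtain ⟨EC₀, hEC₀⟩ := h
  obtain ⟨P, hP, hmax⟩ := exists_isP2Packing_forall_card_le G
  obtain ⟨EC, hEC, hupper⟩ :=
    (hP.isMaximalP2Packing_of_forall_card_le hmax).exists_isTotalEdgeCover_card_add_card_le hEC₀
  have hlower (EC' : Finset (Sym2 V)) (hEC' : IsTotalEdgeCover G EC') :
      Fintype.card V ≤ #P + #EC' := by
    obtain ⟨P', hP', hle⟩ := hEC'.exists_isP2Packing_card_le_card_add_card
    have := hmax P' hP'
    omega
  refine ⟨P, EC, hP, hEC, hmax, fun EC' hEC' => ?_, ?_⟩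
  · have := hlower EC' hEC'
    omega
  · have := hlower EC hEC
    omega
end

section
/- Let G be a graph on n vertices and k a natural number with n > (3/2)·k. Then G has no total edge cover of size at most k. Equivalently, any k edges forming a total edge cover can cover at most (3/2)·k vertices. -/
open Finset

/-!
Let `H` be the graph on `V` whose edges are those of the cover. A connected component of `H`
with `c` edges has at most `c + 1` vertices, being connected, and `c ≥ 2` by totality, so it
has at most `3c / 2` vertices. Summing over the components gives `2 |V| ≤ 3 |EC|`.
-/

namespace SimpleGraph

variable {V : Type*}

lemma card_edgeFinset_fromEdgeSet_le [Fintype V] (s : Finset (Sym2 V))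
    [DecidableRel (fromEdgeSet (s : Set (Sym2 V))).Adj] :
    #(fromEdgeSet (s : Set (Sym2 V))).edgeFinset ≤ #s :=
  card_le_card fun e he => by
    rw [mem_edgeFinset, edgeSet_fromEdgeSet] at he
    exact he.1

variable [Fintype V] [DecidableEq V] {H : SimpleGraph V} [DecidableRel H.Adj]

namespace ConnectedComponent

def edgeFinset (C : H.ConnectedComponent) : Finset (Sym2 V) :=
  H.edgeFinset ∩ C.supp.toFinset.sym2

lemma mem_edgeFinset_of_mem {C : H.ConnectedComponent} {e : Sym2 V} (he : e ∈ H.edgeSet)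
    {v : V} (hv : v ∈ e) (hvC : v ∈ C.supp) : e ∈ C.edgeFinset := by
  induction e using Sym2.ind with
  | h x y =>
    refine mem_inter.mpr ⟨H.mem_edgeFinset.mpr he, Finset.mk_mem_sym2_iff.mpr ?_⟩
    simp only [Set.mem_toFinset]
    have hC := C.mem_supp_congr_adj (H.mem_edgeSet.mp he)
    rcases Sym2.mem_iff.mp hv with rfl | rfl
    · exact ⟨hvC, hC.mp hvC⟩
    · exact ⟨hC.mpr hvC, hvC⟩

lemma mem_supp_of_mem_edgeFinset {C : H.ConnectedComponent} {e : Sym2 V} (he : e ∈ C.edgeFinset)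
    {v : V} (hv : v ∈ e) : v ∈ C.supp :=
  Set.mem_toFinset.mp (mem_sym2_iff.mp (mem_inter.mp he).2 v hv)

lemma card_supp_le_card_edgeFinset_add_one (C : H.ConnectedComponent) :
    #C.supp.toFinset ≤ #C.edgeFinset + 1 := by
  have hC : (H.induce C.supp).Connected := C.connected_toSimpleGraph
  have h := hC.card_vert_le_card_edgeSet_add_one
  rwa [Nat.card_eq_card_toFinset C.supp, Nat.card_eq_fintype_card,
    ← edgeFinset_card, ← card_map (Function.Embedding.subtype (· ∈ C.supp)).sym2Map,
    map_edgeFinset_induce] at h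

end ConnectedComponent

lemma sum_card_supp : ∑ C : H.ConnectedComponent, #C.supp.toFinset = Fintype.card V := by
  classical
  rw [← card_univ, card_eq_sum_card_fiberwise (fun v _ => mem_univ (H.connectedComponentMk v))]
  congr! with C
  ext v
  simp

lemma sum_card_edgeFinset_le : ∑ C : H.ConnectedComponent, #C.edgeFinset ≤ #H.edgeFinset := by
  classical
  rw [← card_biUnion]
  · exact card_le_card (biUnion_subset.mpr fun C _ => inter_subset_left)
  · intro C _ D _ hCD
    rw [Function.onFun, Finset.disjoint_left]
    intro e heC heD
    apply hCD
    have hvC := ConnectedComponent.mem_supp_of_mem_edgeFinset heC e.out_fst_mem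
    have hvD := ConnectedComponent.mem_supp_of_mem_edgeFinset heD e.out_fst_mem
    rw [ConnectedComponent.mem_supp_iff] at hvC hvD
    exact hvC.symm.trans hvD

theorem two_mul_card_le_three_mul_card_edgeFinset
    (h : ∀ C : H.ConnectedComponent, 2 ≤ #C.edgeFinset) :
    2 * Fintype.card V ≤ 3 * #H.edgeFinset := by
  calc 2 * Fintype.card V = ∑ C : H.ConnectedComponent, 2 * #C.supp.toFinset := by
        rw [← mul_sum, sum_card_supp]
    _ ≤ ∑ C : H.ConnectedComponent, 3 * #C.edgeFinset := by
        refine sum_le_sum fun C _ => ?_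
        have := C.card_supp_le_card_edgeFinset_add_one
        have := h C
        omega
    _ ≤ 3 * #H.edgeFinset := by
        rw [← mul_sum]
        exact Nat.mul_le_mul_left 3 sum_card_edgeFinset_le

end SimpleGraph

open SimpleGraph

namespace IsTotalEdgeCover

variable {V : Type*} {G : SimpleGraph V} {EC : Finset (Sym2 V)}

lemma mem_edgeSet_fromEdgeSet (hEC : IsTotalEdgeCover G EC) {e : Sym2 V} (he : e ∈ EC) :
    e ∈ (fromEdgeSet (EC : Set (Sym2 V))).edgeSet := by
  rw [edgeSet_fromEdgeSet]
  exact ⟨he, G.not_isDiag_of_mem_edgeSet (hEC.1 he)⟩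

lemma two_le_card_edgeFinset [Fintype V] [DecidableEq V] (hEC : IsTotalEdgeCover G EC)
    (C : (fromEdgeSet (EC : Set (Sym2 V))).ConnectedComponent) : 2 ≤ #C.edgeFinset := by
  obtain ⟨v, hv⟩ := C.nonempty_supp
  obtain ⟨e, he, hve⟩ := hEC.2.1 v
  obtain ⟨e', he', hne, a, hae, b, hbe', hab⟩ := hEC.2.2 e he
  have heC := ConnectedComponent.mem_edgeFinset_of_mem (hEC.mem_edgeSet_fromEdgeSet he) hve hv
  have hbC : b ∈ C.supp := by
    have haC := ConnectedComponent.mem_supp_of_mem_edgeFinset heC hae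
    rw [ConnectedComponent.mem_supp_iff] at haC ⊢
    exact (ConnectedComponent.sound hab).symm.trans haC
  have he'C := ConnectedComponent.mem_edgeFinset_of_mem (hEC.mem_edgeSet_fromEdgeSet he') hbe' hbC
  calc 2 = #{e', e} := (card_pair hne).symm
    _ ≤ #C.edgeFinset := card_le_card (insert_subset he'C (singleton_subset_iff.mpr heC))

end IsTotalEdgeCover

theorem stmt2_general {V : Type*} [Fintype V] (G : SimpleGraph V) (k : ℕ)
    (hn : 3 * k < 2 * Fintype.card V) :
    ∀ EC : Finset (Sym2 V), IsTotalEdgeCover G EC → ¬ EC.card ≤ k := by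
  classical
  intro EC hEC hk
  have := (two_mul_card_le_three_mul_card_edgeFinset hEC.two_le_card_edgeFinset).trans
    (Nat.mul_le_mul_left 3 (card_edgeFinset_fromEdgeSet_le EC))
  omega

/-- If n > (3/2)k then G has no total edge cover of size at most k. -/
theorem stmt2 {V : Type*} [Fintype V] [DecidableEq V] (G : SimpleGraph V) (k : ℕ)
    (hn : 3 * k < 2 * Fintype.card V) :
    ∀ EC : Finset (Sym2 V), IsTotalEdgeCover G EC → ¬ EC.card ≤ k :=
  stmt2_general G k hn
end

section
/- Let G be a graph with a double crown decomposition (H, C, R). Then G has a P2-packing of size k if and only if the graph G − H − C (obtained by deleting all vertices of H and C) has a P2-packing of size k − |H|. -/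
open Finset

/-- A double crown decomposition (H, C, R) of the vertex set of G. -/
structure IsDoubleCrown {V : Type*} [DecidableEq V] (G : SimpleGraph V)
    (H C R : Finset V) : Prop where
  cover : ∀ v : V, v ∈ H ∨ v ∈ C ∨ v ∈ R
  dHC : Disjoint H C
  dHR : Disjoint H R
  dCR : Disjoint C R
  sep : ∀ c ∈ C, ∀ r ∈ R, ¬ G.Adj c r
  indep : ∀ a ∈ C, ∀ b ∈ C, ¬ G.Adj a b
  crown : ∃ C0 Cp Cpp : Finset V,
    C = C0 ∪ Cp ∪ Cpp ∧ Disjoint C0 Cp ∧ Disjoint C0 Cpp ∧ Disjoint Cp Cpp ∧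
    Cp.card = H.card ∧ Cpp.card = H.card ∧
    (∃ f : {x // x ∈ Cp} ≃ {x // x ∈ H}, ∀ x, G.Adj x.1 (f x).1) ∧
    (∃ f : {x // x ∈ Cpp} ≃ {x // x ∈ H}, ∀ x, G.Adj x.1 (f x).1)

/-- A fat crown decomposition (H, C, R) of the vertex set of G. -/
structure IsFatCrown {V : Type*} [DecidableEq V] (G : SimpleGraph V)
    (H C R : Finset V) : Prop where
  cover : ∀ v : V, v ∈ H ∨ v ∈ C ∨ v ∈ R
  dHC : Disjoint H C
  dHR : Disjoint H R
  dCR : Disjoint C R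
  sep : ∀ c ∈ C, ∀ r ∈ R, ¬ G.Adj c r
  k2s : ∀ v ∈ C, ∃ w ∈ C, G.Adj v w ∧ ∀ u ∈ C, G.Adj v u → u = w
  matching : ∃ f : {x // x ∈ H} → V, Function.Injective f ∧
    (∀ h : {x // x ∈ H}, f h ∈ C ∧ G.Adj h.1 (f h)) ∧
    (∀ h hp : {x // x ∈ H}, h ≠ hp → ¬ G.Adj (f h) (f hp))

lemma mem_P2Verts' {V : Type*} [DecidableEq V] {p : V × V × V} {v : V} :
    v ∈ P2Verts p ↔ v = p.1 ∨ v = p.2.1 ∨ v = p.2.2 := by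
  simp [P2Verts]

lemma packing_subset' {V : Type*} [DecidableEq V] {G : SimpleGraph V}
    {P Q : Finset (V × V × V)} (hQ : Q ⊆ P) (hP : IsP2Packing G P) :
    IsP2Packing G Q :=
  ⟨fun p hp => hP.1 p (hQ hp), fun p hp q hq hpq => hP.2 p (hQ hp) q (hQ hq) hpq⟩

lemma ne_of_disj' {V : Type*} [DecidableEq V] {A B : Finset V} (d : Disjoint A B)
    {a b : V} (ha : a ∈ A) (hb : b ∈ B) : a ≠ b :=
  fun h => (Finset.disjoint_left.mp d ha) (h ▸ hb)

/-- Lemma 1: with a double crown (H,C,R), G has a P2-packing of size k iff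
G - H - C (the induced subgraph on R) has one of size k - |H|. -/
theorem stmt3 {V : Type*} [DecidableEq V] (G : SimpleGraph V)
    (H C R : Finset V) (k : ℕ) (hcrown : IsDoubleCrown G H C R) :
    (∃ P : Finset (V × V × V), IsP2Packing G P ∧ P.card = k) ↔
    (∃ P : Finset (V × V × V), IsP2Packing G P ∧ (∀ p ∈ P, P2Verts p ⊆ R) ∧
      P.card = k - H.card) := by
  constructor
  · rintro ⟨P, hP, hcard⟩
    set Q := P.filter (fun p => P2Verts p ⊆ R) with hQdef
    set s := P.filter (fun p => ¬ P2Verts p ⊆ R) with hsdef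
    have key : ∀ p ∈ s, (P2Verts p ∩ H).Nonempty := by
      intro p hp
      rw [hsdef, mem_filter] at hp
      obtain ⟨hpP, hnot⟩ := hp
      obtain ⟨v, hv, hvR⟩ := Finset.not_subset.mp hnot
      have hP2 := hP.1 p hpP
      rcases hcrown.cover v with hvH | hvC | hvR'
      · exact ⟨v, mem_inter.mpr ⟨hv, hvH⟩⟩
      · have hnb : ∃ w ∈ P2Verts p, G.Adj v w := by
          rcases mem_P2Verts'.mp hv with h1 | h2 | h3
          · exact ⟨p.2.1, mem_P2Verts'.mpr (Or.inr (Or.inl rfl)), by rw [h1]; exact hP2.1⟩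
          · exact ⟨p.1, mem_P2Verts'.mpr (Or.inl rfl), by rw [h2]; exact hP2.1.symm⟩
          · exact ⟨p.2.1, mem_P2Verts'.mpr (Or.inr (Or.inl rfl)), by
              rw [h3]; exact hP2.2.1.symm⟩
        obtain ⟨w, hwP, hvw⟩ := hnb
        have hwH : w ∈ H := by
          rcases hcrown.cover w with h | h | h
          · exact h
          · exact absurd hvw (hcrown.indep v hvC w h)
          · exact absurd hvw (hcrown.sep v hvC w h)
        exact ⟨w, mem_inter.mpr ⟨hwP, hwH⟩⟩
      · exact absurd hvR' hvR
    have hsH : s.card ≤ H.card := by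
      apply Finset.card_le_card_of_injOn
        (fun p => if h : (P2Verts p ∩ H).Nonempty then h.choose else p.1)
      · intro p hp
        have h := key p hp
        simp only [dif_pos h]
        exact (mem_inter.mp h.choose_spec).2
      · intro p hp q hq heq
        by_contra hne
        have hp' := key p hp
        have hq' := key q hq
        simp only [dif_pos hp', dif_pos hq'] at heq
        have hd := hP.2 p (mem_of_mem_filter p hp) q (mem_of_mem_filter q hq) hne
        exact (Finset.disjoint_left.mp hd (mem_inter.mp hp'.choose_spec).1)
          (heq ▸ (mem_inter.mp hq'.choose_spec).1)
    have hsplit : Q.card + s.card = P.card :=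
      Finset.card_filter_add_card_filter_not _
    have hQge : k - H.card ≤ Q.card := by omega
    obtain ⟨T, hTQ, hTcard⟩ := Finset.exists_subset_card_eq hQge
    refine ⟨T, packing_subset' (hTQ.trans (filter_subset _ _)) hP, ?_, hTcard⟩
    intro p hp
    exact (mem_filter.mp (hTQ hp)).2
  · rintro ⟨P, hP, hR, hcard⟩
    obtain ⟨C0, Cp, Cpp, hCeq, d0p, d0pp, dppp, hcp, hcpp, ⟨f, hf⟩, ⟨g, hg⟩⟩ := hcrown.crown
    have hCpC : Cp ⊆ C := by rw [hCeq]; exact subset_union_right.trans subset_union_left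
    have hCppC : Cpp ⊆ C := by rw [hCeq]; exact subset_union_right
    have hadj1 : ∀ h : {x // x ∈ H}, G.Adj (f.symm h).1 h.1 := fun h => by
      have := hf (f.symm h); rwa [Equiv.apply_symm_apply] at this
    have hadj2 : ∀ h : {x // x ∈ H}, G.Adj (g.symm h).1 h.1 := fun h => by
      have := hg (g.symm h); rwa [Equiv.apply_symm_apply] at this
    set trip : {x // x ∈ H} → V × V × V :=
      fun h => ((f.symm h).1, h.1, (g.symm h).1) with htrip
    set newP := H.attach.image trip with hnewP
    have htripmem : ∀ (h : {x // x ∈ H}) (v : V), v ∈ P2Verts (trip h) →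
        (v = (f.symm h).1 ∧ v ∈ Cp) ∨ (v = h.1 ∧ v ∈ H) ∨ (v = (g.symm h).1 ∧ v ∈ Cpp) := by
      intro h v hv
      rcases mem_P2Verts'.mp hv with h1 | h2 | h3
      · exact Or.inl ⟨h1, h1 ▸ (f.symm h).2⟩
      · exact Or.inr (Or.inl ⟨h2, h2 ▸ h.2⟩)
      · exact Or.inr (Or.inr ⟨h3, h3 ▸ (g.symm h).2⟩)
    have dHCp : Disjoint H Cp := hcrown.dHC.mono_right hCpC
    have dHCpp : Disjoint H Cpp := hcrown.dHC.mono_right hCppC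
    have dRCp : Disjoint R Cp := (hcrown.dCR.mono_left hCpC).symm
    have dRCpp : Disjoint R Cpp := (hcrown.dCR.mono_left hCppC).symm
    have dRH : Disjoint R H := hcrown.dHR.symm
    -- disjointness of a P-path and a new path
    have hPnew : ∀ p ∈ P, ∀ h : {x // x ∈ H}, Disjoint (P2Verts p) (P2Verts (trip h)) := by
      intro p hp h
      rw [Finset.disjoint_left]
      intro v hv hv'
      have hvR : v ∈ R := hR p hp hv
      rcases htripmem h v hv' with ⟨_, hm⟩ | ⟨_, hm⟩ | ⟨_, hm⟩
      · exact (Finset.disjoint_left.mp dRCp hvR) hm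
      · exact (Finset.disjoint_left.mp dRH hvR) hm
      · exact (Finset.disjoint_left.mp dRCpp hvR) hm
    -- disjointness of two distinct new paths
    have hnewnew : ∀ h h' : {x // x ∈ H}, h ≠ h' →
        Disjoint (P2Verts (trip h)) (P2Verts (trip h')) := by
      intro h h' hne
      rw [Finset.disjoint_left]
      intro v hv hv'
      rcases htripmem h v hv with ⟨he, hm⟩ | ⟨he, hm⟩ | ⟨he, hm⟩ <;>
        rcases htripmem h' v hv' with ⟨he', hm'⟩ | ⟨he', hm'⟩ | ⟨he', hm'⟩
      · exact hne (f.symm.injective (Subtype.ext (he ▸ he')))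
      · exact (Finset.disjoint_left.mp dHCp hm') hm
      · exact (Finset.disjoint_left.mp dppp hm) hm'
      · exact (Finset.disjoint_left.mp dHCp hm) hm'
      · exact hne (Subtype.ext (he ▸ he'))
      · exact (Finset.disjoint_left.mp dHCpp hm) hm'
      · exact (Finset.disjoint_left.mp dppp hm') hm
      · exact (Finset.disjoint_left.mp dHCpp hm') hm
      · exact hne (g.symm.injective (Subtype.ext (he ▸ he')))
    have htripinj : Function.Injective trip := by
      intro h h' he
      exact Subtype.ext (congrArg (fun p => p.2.1) he)
    have hbig : IsP2Packing G (P ∪ newP) := by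
      constructor
      · intro p hp
        rcases mem_union.mp hp with hp | hp
        · exact hP.1 p hp
        · obtain ⟨h, _, rfl⟩ := mem_image.mp hp
          refine ⟨hadj1 h, (hadj2 h).symm, ?_⟩
          exact ne_of_disj' dppp (f.symm h).2 (g.symm h).2
      · intro p hp q hq hpq
        rcases mem_union.mp hp with hp | hp <;> rcases mem_union.mp hq with hq | hq
        · exact hP.2 p hp q hq hpq
        · obtain ⟨h, _, rfl⟩ := mem_image.mp hq
          exact hPnew p hp h
        · obtain ⟨h, _, rfl⟩ := mem_image.mp hp
          exact (hPnew q hq h).symm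
        · obtain ⟨h, _, rfl⟩ := mem_image.mp hp
          obtain ⟨h', _, rfl⟩ := mem_image.mp hq
          exact hnewnew h h' (fun he => hpq (congrArg trip he))
    have hdisjPnew : Disjoint P newP := by
      rw [Finset.disjoint_left]
      intro p hp hp'
      obtain ⟨h, _, rfl⟩ := mem_image.mp hp'
      have h1 : (trip h).1 ∈ R := hR _ hp (mem_P2Verts'.mpr (Or.inl rfl))
      exact (Finset.disjoint_left.mp dRCp h1) (f.symm h).2
    have hcardnew : newP.card = H.card := by
      rw [hnewP, Finset.card_image_of_injective _ htripinj, Finset.card_attach]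
    have hcardU : (P ∪ newP).card = (k - H.card) + H.card := by
      rw [Finset.card_union_of_disjoint hdisjPnew, hcard, hcardnew]
    have hk : k ≤ (P ∪ newP).card := by omega
    obtain ⟨T, hTU, hTcard⟩ := Finset.exists_subset_card_eq hk
    exact ⟨T, packing_subset' hTU hbig, hTcard⟩
end

section
/- Let P be a maximal P2-packing of a graph G and let Q be a P2-packing with |Q| = |P| + 1 maximizing the number of paths shared with P (i.e., maximizing |{q ∈ Q : ∃ p ∈ P with the same edge set}|). Then every path p ∈ P satisfies |V(p) ∩ V(Q)| ≥ 2. -/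
open Finset

/-- The number of paths of Q whose edge set equals the edge set of some path of P. -/
def sharedPathCount {V : Type*} [DecidableEq V] (P Q : Finset (V × V × V)) : ℕ :=
  (Q.filter (fun q => ∃ p ∈ P, P2Edges p = P2Edges q)).card

lemma mem_P2Verts_iff_edges {V : Type*} [DecidableEq V] (p : V × V × V) (v : V) :
    v ∈ P2Verts p ↔ ∃ e ∈ P2Edges p, v ∈ e := by
  simp only [P2Verts, P2Edges, mem_insert, mem_singleton]
  constructor
  · rintro (h | h | h)
    · exact ⟨s(p.1, p.2.1), Or.inl rfl, Sym2.mem_iff.2 (Or.inl h)⟩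
    · exact ⟨s(p.1, p.2.1), Or.inl rfl, Sym2.mem_iff.2 (Or.inr h)⟩
    · exact ⟨s(p.2.1, p.2.2), Or.inr rfl, Sym2.mem_iff.2 (Or.inr h)⟩
  · rintro ⟨e, (rfl | rfl), h⟩ <;> rw [Sym2.mem_iff] at h <;> tauto

lemma P2Verts_eq_of_edges_eq {V : Type*} [DecidableEq V] {p q : V × V × V}
    (h : P2Edges p = P2Edges q) : P2Verts p = P2Verts q := by
  ext v
  rw [mem_P2Verts_iff_edges, mem_P2Verts_iff_edges, h]

lemma P2Verts_nonempty {V : Type*} [DecidableEq V] (p : V × V × V) :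
    (P2Verts p).Nonempty := ⟨p.1, by simp [P2Verts]⟩

/-- If Q is a P2-packing of size |P|+1 maximizing the number of paths shared
with the maximal P2-packing P, then every p ∈ P meets V(Q) in at least 2 vertices. -/
theorem stmt7 {V : Type*} [DecidableEq V] (G : SimpleGraph V)
    (P Q : Finset (V × V × V))
    (hP : IsMaximalP2Packing G P)
    (hQ : IsP2Packing G Q) (hcard : Q.card = P.card + 1)
    (hmax : ∀ Q' : Finset (V × V × V), IsP2Packing G Q' → Q'.card = P.card + 1 →
      sharedPathCount P Q' ≤ sharedPathCount P Q) :
    ∀ p ∈ P, 2 ≤ (P2Verts p ∩ PackVerts Q).card := by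
  classical
  intro p hp
  by_contra hlt
  push_neg at hlt
  -- the intersection has at most one element
  have hle1 : (P2Verts p ∩ PackVerts Q).card ≤ 1 := by omega
  -- p has at least two vertices
  have hp2 : IsP2 G p := hP.1.1 p hp
  have hcardp : 2 ≤ (P2Verts p).card := by
    have : ({p.1, p.2.2} : Finset V) ⊆ P2Verts p := by
      intro x hx; simp only [mem_insert, mem_singleton] at hx
      rcases hx with rfl | rfl <;> simp [P2Verts]
    calc 2 = ({p.1, p.2.2} : Finset V).card := by
            rw [card_insert_of_notMem (by simpa using hp2.2.2), card_singleton]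
      _ ≤ (P2Verts p).card := card_le_card this
  -- p ∉ Q
  have hpQ : p ∉ Q := by
    intro hmem
    have hsub : P2Verts p ⊆ PackVerts Q := fun v hv => mem_biUnion.2 ⟨p, hmem, hv⟩
    have : P2Verts p ∩ PackVerts Q = P2Verts p := inter_eq_left.2 hsub
    rw [this] at hlt; omega
  -- the shared predicate
  set pred : V × V × V → Prop := fun q => ∃ p' ∈ P, P2Edges p' = P2Edges q with hpred
  -- find q0 ∈ Q, unshared, such that p is disjoint from all other paths of Q
  have key : ∃ q0 ∈ Q, ¬ pred q0 ∧
      ∀ q ∈ Q, q ≠ q0 → Disjoint (P2Verts p) (P2Verts q) := by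
    by_cases hne : (P2Verts p ∩ PackVerts Q).Nonempty
    · obtain ⟨v, hv⟩ := hne
      have hvp : v ∈ P2Verts p := (mem_inter.1 hv).1
      have hvQ : v ∈ PackVerts Q := (mem_inter.1 hv).2
      obtain ⟨q0, hq0Q, hvq0⟩ := mem_biUnion.1 hvQ
      refine ⟨q0, hq0Q, ?_, ?_⟩
      · rintro ⟨p', hp', hedges⟩
        have hvv : P2Verts p' = P2Verts q0 := P2Verts_eq_of_edges_eq hedges
        by_cases hpp : p' = p
        · subst hpp
          have hsub : P2Verts p' ⊆ PackVerts Q := by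
            rw [hvv]; exact fun x hx => mem_biUnion.2 ⟨q0, hq0Q, hx⟩
          have : P2Verts p' ∩ PackVerts Q = P2Verts p' := inter_eq_left.2 hsub
          rw [this] at hlt; omega
        · have hdisj := hP.1.2 p' hp' p hp hpp
          exact (disjoint_left.1 hdisj (hvv ▸ hvq0)) hvp
      · intro q hqQ hqne
        rw [disjoint_left]
        intro w hwp hwq
        have hwQ : w ∈ PackVerts Q := mem_biUnion.2 ⟨q, hqQ, hwq⟩
        have hw : w ∈ P2Verts p ∩ PackVerts Q := mem_inter.2 ⟨hwp, hwQ⟩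
        -- card ≤ 1 forces w = v
        have : w = v := by
          by_contra hwv
          have : ({w, v} : Finset V) ⊆ P2Verts p ∩ PackVerts Q := by
            intro x hx; simp only [mem_insert, mem_singleton] at hx
            rcases hx with rfl | rfl <;> assumption
          have h2 : 2 ≤ (P2Verts p ∩ PackVerts Q).card := by
            calc 2 = ({w, v} : Finset V).card := by
                  rw [card_insert_of_notMem (by simpa using hwv), card_singleton]
              _ ≤ _ := card_le_card this
          omega
        subst this
        exact (disjoint_left.1 (hQ.2 q hqQ q0 hq0Q hqne) hwq) hvq0
    · -- intersection empty: p is disjoint from everything in Q; find unshared q0 by pigeonhole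
      have hdisjall : ∀ q ∈ Q, Disjoint (P2Verts p) (P2Verts q) := by
        intro q hqQ
        rw [disjoint_left]
        intro w hwp hwq
        exact hne ⟨w, mem_inter.2 ⟨hwp, mem_biUnion.2 ⟨q, hqQ, hwq⟩⟩⟩
      -- pigeonhole: not all paths of Q are shared
      have hex : ∃ q0 ∈ Q, ¬ pred q0 := by
        by_contra hall
        push_neg at hall
        -- injective map from Q to P
        have hinj : ∀ q1 ∈ Q, ∀ q2 ∈ Q, ∀ p1 ∈ P, ∀ p2 ∈ P,
            P2Edges p1 = P2Edges q1 → P2Edges p2 = P2Edges q2 → p1 = p2 → q1 = q2 := by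
          intro q1 hq1 q2 hq2 p1 hp1 p2 hp2 he1 he2 hpe
          by_contra hne'
          have hdq := hQ.2 q1 hq1 q2 hq2 hne'
          have hv1 : P2Verts p1 = P2Verts q1 := P2Verts_eq_of_edges_eq he1
          have hv2 : P2Verts p2 = P2Verts q2 := P2Verts_eq_of_edges_eq he2
          obtain ⟨x, hx⟩ := P2Verts_nonempty q1
          have hx2 : x ∈ P2Verts q2 := by
            rw [← hv2, ← hpe, hv1]; exact hx
          exact (disjoint_left.1 hdq hx) hx2
        set f : V × V × V → V × V × V := fun q =>
          if h : pred q then h.choose else q with hf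
        have hcardle : Q.card ≤ P.card := by
          apply card_le_card_of_injOn f
          · intro q hqQ
            have h := hall q hqQ
            simp only [hf, dif_pos h]
            exact h.choose_spec.1
          · intro q1 hq1 q2 hq2 hfeq
            have h1 := hall q1 hq1
            have h2 := hall q2 hq2
            simp only [hf, dif_pos h1, dif_pos h2] at hfeq
            exact hinj q1 hq1 q2 hq2 _ h1.choose_spec.1 _ h2.choose_spec.1
              h1.choose_spec.2 h2.choose_spec.2 hfeq
        omega
      obtain ⟨q0, hq0Q, hq0⟩ := hex
      exact ⟨q0, hq0Q, hq0, fun q hqQ _ => hdisjall q hqQ⟩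
  obtain ⟨q0, hq0Q, hq0unshared, hq0disj⟩ := key
  -- build Q' = insert p (Q.erase q0)
  set Q' : Finset (V × V × V) := insert p (Q.erase q0) with hQ'
  have hpnotin : p ∉ Q.erase q0 := fun h => hpQ (mem_of_mem_erase h)
  have hQ'pack : IsP2Packing G Q' := by
    constructor
    · intro r hr
      rcases mem_insert.1 hr with rfl | hr'
      · exact hp2
      · exact hQ.1 r (mem_of_mem_erase hr')
    · intro r hr s hs hrs
      rcases mem_insert.1 hr with rfl | hr' <;> rcases mem_insert.1 hs with rfl | hs'
      · exact absurd rfl hrs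
      · exact hq0disj s (mem_of_mem_erase hs') (ne_of_mem_erase hs')
      · exact (hq0disj r (mem_of_mem_erase hr') (ne_of_mem_erase hr')).symm
      · exact hQ.2 r (mem_of_mem_erase hr') s (mem_of_mem_erase hs') hrs
  have hQ'card : Q'.card = P.card + 1 := by
    rw [hQ', card_insert_of_notMem hpnotin, card_erase_of_mem hq0Q, hcard]
    omega
  -- the shared count strictly increases
  have hcount : sharedPathCount P Q' = sharedPathCount P Q + 1 := by
    have hpredp : pred p := ⟨p, hp, rfl⟩
    unfold sharedPathCount
    rw [hQ', filter_insert, if_pos hpredp,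
      card_insert_of_notMem (fun h => hpnotin (mem_of_mem_filter _ h))]
    congr 1
    rw [Finset.filter_erase]
    rw [Finset.erase_eq_of_notMem]
    intro h
    exact hq0unshared (mem_filter.1 h).2
  have := hmax Q' hQ'pack hQ'card
  omega
end

section
/- For all natural numbers j ≥ 1 and all integers z with 0 ≤ z ≤ 0.5j − 1, we have C(3j, j−z)·C(4j, z) < C(3j, j−(z+1))·C(4j, z+1), where C(n,k) denotes the binomial coefficient. -/
/-- Lemma (monotonicity 1): C(3j, j-z) C(4j, z) < C(3j, j-(z+1)) C(4j, z+1)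
for 0 ≤ z ≤ j/2 - 1. -/
theorem stmt11 (j z : ℕ) (hj : 1 ≤ j) (hz : 2 * (z + 1) ≤ j) :
    Nat.choose (3 * j) (j - z) * Nat.choose (4 * j) z <
      Nat.choose (3 * j) (j - (z + 1)) * Nat.choose (4 * j) (z + 1) := by
  set k := j - (z + 1) with hk
  have hjk : j = k + z + 1 := by omega
  have hkz : z + 1 ≤ k := by omega
  have h1 : j - z = k + 1 := by omega
  rw [h1]
  have e1 : Nat.choose (3 * j) (k + 1) * (k + 1)
      = Nat.choose (3 * j) k * (3 * j - k) := Nat.choose_succ_right_eq _ _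
  have e2 : Nat.choose (4 * j) (z + 1) * (z + 1)
      = Nat.choose (4 * j) z * (4 * j - z) := Nat.choose_succ_right_eq _ _
  have hb : 0 < Nat.choose (3 * j) k := Nat.choose_pos (by omega)
  have hc : 0 < Nat.choose (4 * j) z := Nat.choose_pos (by omega)
  have key : (3 * j - k) * (z + 1) < (k + 1) * (4 * j - z) := by
    have : 3 * j - k = 2 * k + 3 * z + 3 := by omega
    have h4 : 4 * j - z = 4 * k + 3 * z + 4 := by omega
    rw [this, h4]
    nlinarith [hkz]
  have hpos : 0 < (k + 1) * (z + 1) := by positivity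
  refine Nat.lt_of_mul_lt_mul_right (a := (k + 1) * (z + 1)) ?_
  calc Nat.choose (3 * j) (k + 1) * Nat.choose (4 * j) z * ((k + 1) * (z + 1))
      = (Nat.choose (3 * j) (k + 1) * (k + 1)) * Nat.choose (4 * j) z * (z + 1) := by ring
    _ = Nat.choose (3 * j) k * Nat.choose (4 * j) z * ((3 * j - k) * (z + 1)) := by
        rw [e1]; ring
    _ < Nat.choose (3 * j) k * Nat.choose (4 * j) z * ((k + 1) * (4 * j - z)) := by
        exact mul_lt_mul_of_pos_left key (by positivity)
    _ = Nat.choose (3 * j) k * (Nat.choose (4 * j) (z + 1) * (z + 1)) * (k + 1) := by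
        rw [e2]; ring
    _ = Nat.choose (3 * j) k * Nat.choose (4 * j) (z + 1) * ((k + 1) * (z + 1)) := by ring
end

section
/- For all natural numbers j ≥ 1 and all integers z with 0 ≤ z ≤ 0.5j − 1, we have C(3j, 2j−z)·C(4j, z) < C(3j, 2j−(z+1))·C(4j, z+1), where C(n,k) denotes the binomial coefficient. -/
/-- Lemma (monotonicity 2): C(3j, 2j-z) C(4j, z) < C(3j, 2j-(z+1)) C(4j, z+1)
for 0 ≤ z ≤ j/2 - 1. -/
theorem stmt12 (j z : ℕ) (hj : 1 ≤ j) (hz : 2 * (z + 1) ≤ j) :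
    Nat.choose (3 * j) (2 * j - z) * Nat.choose (4 * j) z <
      Nat.choose (3 * j) (2 * j - (z + 1)) * Nat.choose (4 * j) (z + 1) := by
  have h1 : Nat.choose (3*j) (2*j - z) * (2*j - z) =
      Nat.choose (3*j) (2*j - (z+1)) * (j + z + 1) := by
    have hk : 2*j - z = (2*j - (z+1)) + 1 := by omega
    rw [hk, Nat.choose_succ_right_eq]
    congr 1
    omega
  have h2 : Nat.choose (4*j) (z+1) * (z+1) = Nat.choose (4*j) z * (4*j - z) :=
    Nat.choose_succ_right_eq _ _
  have hApos : 0 < Nat.choose (3*j) (2*j - (z+1)) := Nat.choose_pos (by omega)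
  have hBpos : 0 < Nat.choose (4*j) (z+1) := Nat.choose_pos (by omega)
  have hkey : (j + z + 1) * (z + 1) < (2*j - z) * (4*j - z) := by
    zify [show z ≤ 2*j by omega, show z ≤ 4*j by omega]
    nlinarith [sq_nonneg (j - z : ℤ)]
  have hcomb : Nat.choose (3*j) (2*j - z) * Nat.choose (4*j) z * ((2*j - z) * (4*j - z))
      = Nat.choose (3*j) (2*j - (z+1)) * Nat.choose (4*j) (z+1) * ((j+z+1)*(z+1)) := by
    rw [show Nat.choose (3*j) (2*j - z) * Nat.choose (4*j) z * ((2*j - z) * (4*j - z))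
        = (Nat.choose (3*j) (2*j - z) * (2*j - z)) * (Nat.choose (4*j) z * (4*j - z)) by ring,
      h1, ← h2]
    ring
  have hKpos : 0 < (2*j - z) * (4*j - z) := Nat.mul_pos (by omega) (by omega)
  refine Nat.lt_of_mul_lt_mul_right (a := (2*j-z)*(4*j-z)) ?_
  rw [hcomb]
  exact (Nat.mul_lt_mul_left (Nat.mul_pos hApos hBpos)).mpr hkey
end

section
/- Let a P2-packing Q of a graph G and a P2-packing P be given, with Q chosen (among packings of size |P|+1) to lexicographically maximize first the number of shared paths with P and then the number of shared edges with P. If some q = q₁q₂q₃ ∈ Q has its midpoint q₂ lying on a path p = p₁p₂p₃ ∈ P at position s, and a path-neighbor pₛ₊₁ (or pₛ₋₁) of q₂ on p is not in V(Q), and one endpoint qᵢ (i ∈ {1,3}) of q is not in V(P), then replacing qᵢ in q by that neighbor yields a P2-packing of the same size sharing strictly more edges with P — a contradiction. Hence no q ∈ Q is foldable. -/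
open Finset

def sharedEdgeCount {V : Type*} [DecidableEq V] (P Q : Finset (V × V × V)) : ℕ :=
  ∑ p ∈ P, ∑ q ∈ Q, (P2Edges p ∩ P2Edges q).card

/-- s and t are neighbouring vertices along the path p = p₁p₂p₃. -/
def PathNbr {V : Type*} (p : V × V × V) (s t : V) : Prop :=
  (s = p.1 ∧ t = p.2.1) ∨ (s = p.2.1 ∧ (t = p.1 ∨ t = p.2.2)) ∨
    (s = p.2.2 ∧ t = p.2.1)

/-- q is foldable on p: the midpoint of q lies on p at a position having a
path-neighbour on p outside V(Q). -/
def Foldable {V : Type*} [DecidableEq V] (Q : Finset (V × V × V))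
    (q p : V × V × V) : Prop :=
  ∃ s t : V, PathNbr p s t ∧ q.2.1 = s ∧ t ∉ PackVerts Q

lemma key19 {V : Type*} [DecidableEq V] (G : SimpleGraph V)
    (P Q : Finset (V × V × V))
    (hP : IsP2Packing G P) (hQ : IsP2Packing G Q) (hcard : Q.card = P.card + 1)
    (hmax1 : ∀ Q' : Finset (V × V × V), IsP2Packing G Q' → Q'.card = P.card + 1 →
      sharedPathCount P Q' ≤ sharedPathCount P Q)
    (hmax2 : ∀ Q' : Finset (V × V × V), IsP2Packing G Q' → Q'.card = P.card + 1 →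
      sharedPathCount P Q' = sharedPathCount P Q →
      sharedEdgeCount P Q' ≤ sharedEdgeCount P Q)
    (q : V × V × V) (hq : q ∈ Q) (p : V × V × V) (hp : p ∈ P) (x y t : V)
    (hV : P2Verts q = {x, q.2.1, y})
    (hE : P2Edges q = {s(x, q.2.1), s(q.2.1, y)})
    (hyadj : G.Adj q.2.1 y)
    (hadj : G.Adj q.2.1 t)
    (hedge : s(q.2.1, t) ∈ P2Edges p)
    (htQ : t ∉ PackVerts Q)
    (hre : ∀ p' ∈ P, s(x, q.2.1) ∉ P2Edges p') : False := by
  have htq : t ∉ P2Verts q := fun h => htQ (Finset.mem_biUnion.mpr ⟨q, hq, h⟩)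
  have hty : t ≠ y := by
    rw [hV] at htq; simp only [Finset.mem_insert, Finset.mem_singleton] at htq
    tauto
  have htm : t ≠ q.2.1 := hadj.ne'
  set q' : V × V × V := (t, q.2.1, y) with hq'def
  have hq'P2 : IsP2 G q' := ⟨hadj.symm, hyadj, hty⟩
  have htq' : t ∈ P2Verts q' := by simp [P2Verts, hq'def]
  have hq'notQ : q' ∉ Q := fun h => htQ (Finset.mem_biUnion.mpr ⟨q', h, htq'⟩)
  have hVq' : P2Verts q' ⊆ insert t (P2Verts q) := by
    rw [hV]; intro v hv
    simp only [P2Verts, Finset.mem_insert, Finset.mem_singleton, hq'def] at hv ⊢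
    tauto
  set Q' := insert q' (Q.erase q) with hQ'def
  have hq'ne : q' ∉ Q.erase q := fun h => hq'notQ (Finset.mem_of_mem_erase h)
  have hq'card : Q'.card = P.card + 1 := by
    rw [hQ'def, Finset.card_insert_of_notMem hq'ne, Finset.card_erase_of_mem hq]
    have : 1 ≤ Q.card := Finset.card_pos.mpr ⟨q, hq⟩
    omega
  have hdisj : ∀ r ∈ Q.erase q, Disjoint (P2Verts q') (P2Verts r) := by
    intro r hr
    obtain ⟨hrne, hrQ⟩ := Finset.mem_erase.mp hr
    have hd := hQ.2 q hq r hrQ (fun h => hrne h.symm)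
    have htr : t ∉ P2Verts r := fun h => htQ (Finset.mem_biUnion.mpr ⟨r, hrQ, h⟩)
    exact Disjoint.mono_left hVq' ((Finset.disjoint_insert_left).mpr ⟨htr, hd⟩)
  have hQ'pack : IsP2Packing G Q' := by
    constructor
    · intro r hr
      rcases Finset.mem_insert.mp hr with h | h
      · exact h ▸ hq'P2
      · exact hQ.1 r (Finset.mem_of_mem_erase h)
    · intro a ha b hb hab
      rcases Finset.mem_insert.mp ha with h1 | h1 <;> rcases Finset.mem_insert.mp hb with h2 | h2
      · exact absurd (h1.trans h2.symm) hab
      · exact h1 ▸ hdisj b h2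
      · exact (h2 ▸ hdisj a h1).symm
      · exact hQ.2 a (Finset.mem_of_mem_erase h1) b (Finset.mem_of_mem_erase h2) hab
  have hqns : ∀ p' ∈ P, P2Edges p' ≠ P2Edges q := by
    intro p' hp' hpe
    exact hre p' hp' (by rw [hpe, hE]; exact Finset.mem_insert_self _ _)
  have hpc : sharedPathCount P Q ≤ sharedPathCount P Q' := by
    unfold sharedPathCount
    apply Finset.card_le_card
    intro r hr
    rw [Finset.mem_filter] at hr ⊢
    refine ⟨?_, hr.2⟩
    have hrq : r ≠ q := by
      rintro rfl
      obtain ⟨p', hp', hpe⟩ := hr.2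
      exact hqns p' hp' hpe
    exact Finset.mem_insert_of_mem (Finset.mem_erase.mpr ⟨hrq, hr.1⟩)
  have hpc2 : sharedPathCount P Q' = sharedPathCount P Q :=
    le_antisymm (hmax1 Q' hQ'pack hq'card) hpc
  -- edge counts
  have hswap : ∀ R : Finset (V × V × V),
      sharedEdgeCount P R = ∑ r ∈ R, ∑ p' ∈ P, (P2Edges p' ∩ P2Edges r).card := by
    intro R; exact Finset.sum_comm
  have hEQ : sharedEdgeCount P Q
      = (∑ r ∈ Q.erase q, ∑ p' ∈ P, (P2Edges p' ∩ P2Edges r).card)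
        + ∑ p' ∈ P, (P2Edges p' ∩ P2Edges q).card := by
    rw [hswap, ← Finset.sum_erase_add _ _ hq]
  have hEQ' : sharedEdgeCount P Q'
      = (∑ r ∈ Q.erase q, ∑ p' ∈ P, (P2Edges p' ∩ P2Edges r).card)
        + ∑ p' ∈ P, (P2Edges p' ∩ P2Edges q').card := by
    rw [hswap, hQ'def, Finset.sum_insert hq'ne, add_comm]
  have hmy : s(q.2.1, y) ∈ P2Edges q' := by
    simp [P2Edges, hq'def]
  have hlt : (∑ p' ∈ P, (P2Edges p' ∩ P2Edges q).card)
      < ∑ p' ∈ P, (P2Edges p' ∩ P2Edges q').card := by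
    have hcard_le : ∀ p' ∈ P, (P2Edges p' ∩ P2Edges q).card
        ≤ (P2Edges p' ∩ P2Edges q').card := by
      intro p' hp'
      rw [hE, Finset.inter_comm, Finset.insert_inter_of_notMem (hre p' hp'),
        Finset.inter_comm]
      apply Finset.card_le_card
      apply Finset.inter_subset_inter_left
      intro e he
      rw [Finset.mem_singleton] at he
      exact he ▸ hmy
    apply Finset.sum_lt_sum hcard_le
    refine ⟨p, hp, ?_⟩
    rw [hE, Finset.inter_comm, Finset.insert_inter_of_notMem (hre p hp),
      Finset.inter_comm]
    apply Finset.card_lt_card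
    constructor
    · apply Finset.inter_subset_inter_left
      intro e he
      rw [Finset.mem_singleton] at he
      exact he ▸ hmy
    · intro hsub
      have h1 : s(q.2.1, t) ∈ P2Edges p ∩ P2Edges q' := by
        refine Finset.mem_inter.mpr ⟨hedge, ?_⟩
        simp [P2Edges, hq'def, Sym2.eq_swap]
      have h2 := hsub h1
      rw [Finset.mem_inter, Finset.mem_singleton, Sym2.eq_iff] at h2
      rcases h2.2 with ⟨_, h⟩ | ⟨_, h⟩
      · exact hty h
      · exact htm h
  have := hmax2 Q' hQ'pack hq'card hpc2
  omega

/-- Lemma: if Q lexicographically maximizes first the number of shared paths and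
then the number of shared edges with P, then no q ∈ Q is foldable on any p ∈ P. -/
theorem stmt19 {V : Type*} [DecidableEq V] (G : SimpleGraph V)
    (P Q : Finset (V × V × V))
    (hP : IsP2Packing G P) (hQ : IsP2Packing G Q) (hcard : Q.card = P.card + 1)
    (hmax1 : ∀ Q' : Finset (V × V × V), IsP2Packing G Q' → Q'.card = P.card + 1 →
      sharedPathCount P Q' ≤ sharedPathCount P Q)
    (hmax2 : ∀ Q' : Finset (V × V × V), IsP2Packing G Q' → Q'.card = P.card + 1 →
      sharedPathCount P Q' = sharedPathCount P Q →
      sharedEdgeCount P Q' ≤ sharedEdgeCount P Q) :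
    ∀ q ∈ Q, ∀ p ∈ P, ¬ Foldable Q q p := by
  rintro q hq p hp ⟨s, t, hnbr, hmid, htQ⟩
  have hpP2 := hP.1 p hp
  have hqP2 := hQ.1 q hq
  have hbase : G.Adj q.2.1 t ∧ s(q.2.1, t) ∈ P2Edges p ∧ q.2.1 ∈ P2Verts p := by
    rw [hmid]
    rcases hnbr with ⟨hs, ht⟩ | ⟨hs, ht | ht⟩ | ⟨hs, ht⟩ <;> subst hs <;> subst ht
    · exact ⟨hpP2.1, by simp [P2Edges], by simp [P2Verts]⟩
    · exact ⟨hpP2.1.symm, by simp [P2Edges, Sym2.eq_swap], by simp [P2Verts]⟩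
    · exact ⟨hpP2.2.1, by simp [P2Edges], by simp [P2Verts]⟩
    · exact ⟨hpP2.2.1.symm, by simp [P2Edges, Sym2.eq_swap], by simp [P2Verts]⟩
  obtain ⟨hadj, hedge, hmem⟩ := hbase
  have htq : t ∉ P2Verts q := fun h => htQ (Finset.mem_biUnion.mpr ⟨q, hq, h⟩)
  have ht1 : t ≠ q.1 := by simp only [P2Verts, Finset.mem_insert, Finset.mem_singleton] at htq; tauto
  have ht3 : t ≠ q.2.2 := by simp only [P2Verts, Finset.mem_insert, Finset.mem_singleton] at htq; tauto
  have htm : t ≠ q.2.1 := hadj.ne'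
  -- any path of P containing an edge through q.2.1 must be p
  have hA : ∀ p' ∈ P, q.2.1 ∈ P2Verts p' → p' = p := by
    intro p' hp' hm
    by_contra hne
    exact (Finset.disjoint_left.mp (hP.2 p' hp' p hp hne)) hm hmem
  have hvert : ∀ p' : V × V × V, ∀ a : V, s(a, q.2.1) ∈ P2Edges p' → q.2.1 ∈ P2Verts p' := by
    intro p' a h
    simp only [P2Edges, Finset.mem_insert, Finset.mem_singleton, Sym2.eq_iff] at h
    simp only [P2Verts, Finset.mem_insert, Finset.mem_singleton]
    tauto
  -- not both edges of q lie on p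
  have hB : ¬ (s(q.1, q.2.1) ∈ P2Edges p ∧ s(q.2.1, q.2.2) ∈ P2Edges p) := by
    rintro ⟨h1, h2⟩
    have hne : s(q.1, q.2.1) ≠ s(q.2.1, q.2.2) := by
      intro h
      rw [Sym2.eq_iff] at h
      rcases h with ⟨ha, hb⟩ | ⟨ha, hb⟩
      · exact hqP2.1.ne ha
      · exact hqP2.2.2 ha
    have hsub : ({s(q.1, q.2.1), s(q.2.1, q.2.2)} : Finset (Sym2 V)) ⊆ P2Edges p :=
      Finset.insert_subset h1 (Finset.singleton_subset_iff.mpr h2)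
    have hc2 : (P2Edges p).card ≤ 2 := by
      apply le_trans (Finset.card_insert_le _ _)
      simp
    have hc2' : ({s(q.1, q.2.1), s(q.2.1, q.2.2)} : Finset (Sym2 V)).card = 2 := by
      rw [Finset.card_insert_of_notMem (by simpa using hne), Finset.card_singleton]
    have heq : P2Edges p = ({s(q.1, q.2.1), s(q.2.1, q.2.2)} : Finset (Sym2 V)) :=
      (Finset.eq_of_subset_of_card_le hsub (by rw [hc2']; exact hc2)).symm
    rw [heq, Finset.mem_insert, Finset.mem_singleton, Sym2.eq_iff, Sym2.eq_iff] at hedge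
    rcases hedge with (⟨ha, hb⟩ | ⟨ha, hb⟩) | (⟨ha, hb⟩ | ⟨ha, hb⟩)
    · exact htm hb
    · exact ht1 hb
    · exact ht3 hb
    · exact htm hb
  by_cases h1 : ∃ p' ∈ P, s(q.1, q.2.1) ∈ P2Edges p'
  · obtain ⟨p₁, hp₁, he₁⟩ := h1
    have hpe : p₁ = p := hA p₁ hp₁ (hvert p₁ q.1 he₁)
    rw [hpe] at he₁
    have hre : ∀ p' ∈ P, s(q.2.2, q.2.1) ∉ P2Edges p' := by
      intro p' hp' h
      have hpe' : p' = p := hA p' hp' (hvert p' q.2.2 h)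
      rw [hpe'] at h
      exact hB ⟨he₁, by rwa [Sym2.eq_swap] at h⟩
    refine key19 G P Q hP hQ hcard hmax1 hmax2 q hq p hp q.2.2 q.1 t ?_ ?_
      hqP2.1.symm hadj hedge htQ hre
    · ext v; simp only [P2Verts, Finset.mem_insert, Finset.mem_singleton]; tauto
    · show ({s(q.1, q.2.1), s(q.2.1, q.2.2)} : Finset (Sym2 V))
        = {s(q.2.2, q.2.1), s(q.2.1, q.1)}
      rw [Sym2.eq_swap (a := q.2.2), Sym2.eq_swap (a := q.2.1) (b := q.1),
        Finset.pair_comm]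
  · push_neg at h1
    exact key19 G P Q hP hQ hcard hmax1 hmax2 q hq p hp q.1 q.2.2 t rfl rfl
      hqP2.2.1 hadj hedge htQ h1
end
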